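/- For every p ∈ (0, 1/2], it holds that p ≥ H₂(p) / ( 2 · log₂( 6 / H₂(p) ) ); equivalently, the inverse of the binary entropy function on [0, 1/2] satisfies H₂⁻¹(s) ≥ s / (2 · log₂(6/s)) for all s ∈ (0, 1]. -/

import Mathlib

/-- The binary entropy function (base 2):
`H₂(p) = - p·log₂ p - (1 - p)·log₂(1 - p)`.
(The convention `0 · log₂ 0 = 0` is automatic since `Real.logb 2 0 = 0`.) -/
noncomputable def binEnt (p : ℝ) : ℝ :=
  -(p * Real.logb 2 p) - (1 - p) * Real.logb 2 (1 - p)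

/-!
Write `H = H₂(p)`. Since `-(1 - p) log (1 - p) ≤ p`, we have `H log 2 ≤ p (1 - log p)`, and the claim
`H ≤ 2 p log₂ (6 / H)` reduces, after exponentiating `1 - log p ≤ 2 log (6 / H)`, to `e H² ≤ 36 p`.
That follows from the elementary bound `e x (1 - log x)² ≤ 4` on `(0, e]` together with
`log 2 ≥ 1/3`.
-/

open Real

theorem binEnt_eq_binEntropy_div_log_two (p : ℝ) : binEnt p = binEntropy p / log 2 := by
  simp only [binEnt, binEntropy, logb, log_inv]
  ring

namespace Real

theorem binEntropy_le_mul_one_sub_log {p : ℝ} (hp : p ≤ 1) :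
    binEntropy p ≤ p * (1 - log p) := by
  have := negMulLog_le_one_sub_self (sub_nonneg.2 hp)
  rw [binEntropy_eq_negMulLog_add_negMulLog_one_sub, negMulLog]
  linarith

/-- Sharp at `x = exp (-1)`. -/
theorem exp_one_mul_mul_one_sub_log_sq_le {x : ℝ} (hx0 : 0 < x) (hx1 : log x ≤ 1) :
    exp 1 * x * (1 - log x) ^ 2 ≤ 4 := by
  -- With `t = √(e x)` one has `1 - log x = 2 (1 - log t) ≤ 2 / t`.
  set t := √(exp 1 * x)
  have ht0 : 0 < t := by positivity
  have ht_sq : t ^ 2 = exp 1 * x := sq_sqrt (by positivity)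
  have hlog_t : 1 - log x = 2 * (1 - log t) := by
    rw [log_sqrt (by positivity), log_mul (exp_pos 1).ne' hx0.ne', log_exp]
    ring
  have hle : 1 - log x ≤ 2 / t := by
    have := one_sub_inv_le_log_of_pos ht0
    rw [hlog_t, div_eq_mul_inv]
    linarith
  have hsq : (1 - log x) ^ 2 ≤ (2 / t) ^ 2 := pow_le_pow_left₀ (by linarith) hle 2
  calc exp 1 * x * (1 - log x) ^ 2 ≤ t ^ 2 * (2 / t) ^ 2 := by
        rw [ht_sq]; gcongr
    _ = 4 := by field_simp; norm_num

end Real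

theorem le_two_mul_logb_six_div {p s : ℝ} (hp0 : 0 < p) (hp1 : log p ≤ 1) (hs : 0 < s)
    (hsp : s * log 2 ≤ p * (1 - log p)) : s ≤ 2 * p * logb 2 (6 / s) := by
  have hl2 : 1 / 3 < log 2 := by linarith [log_two_gt_d9]
  have hsq : exp 1 * s ^ 2 ≤ 36 * p := by
    have hsL : exp 1 * (s * log 2) ^ 2 ≤ 4 * p :=
      calc exp 1 * (s * log 2) ^ 2 ≤ exp 1 * (p * (1 - log p)) ^ 2 := by gcongr
        _ = p * (exp 1 * p * (1 - log p) ^ 2) := by ring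
        _ ≤ p * 4 := by gcongr; exact exp_one_mul_mul_one_sub_log_sq_le hp0 hp1
        _ = 4 * p := mul_comm _ _
    have hL2 : 1 ≤ 9 * log 2 ^ 2 := by nlinarith
    nlinarith [mul_le_mul_of_nonneg_left hL2 (by positivity : 0 ≤ exp 1 * s ^ 2)]
  have hlog : 1 - log p ≤ 2 * log (6 / s) := by
    have h := log_le_log (by positivity) ((div_le_div_iff₀ hp0 (by positivity)).2
      (by linarith : exp 1 * s ^ 2 ≤ 6 ^ 2 * p))
    rw [log_div (exp_pos 1).ne' hp0.ne', log_exp, ← div_pow, log_pow] at h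
    push_cast at h
    linarith
  rw [logb, ← mul_div_assoc, le_div_iff₀ (by positivity)]
  nlinarith

/-- (Lemma of Calabro.) For every `p ∈ (0, 1/2]`,
`p ≥ H₂(p) / (2 · log₂(6 / H₂(p)))`; equivalently, the inverse binary entropy
function satisfies `H₂⁻¹(s) ≥ s / (2 · log₂(6/s))` for all `s ∈ (0, 1]`. -/
theorem inv_binEnt_lower_bound (p : ℝ) (hp0 : 0 < p) (hp : p ≤ 1 / 2) :
    p ≥ binEnt p / (2 * Real.logb 2 (6 / binEnt p)) := by
  have hp1 : p < 1 := by linarith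
  have hH : 0 < binEnt p := by
    rw [binEnt_eq_binEntropy_div_log_two]
    exact div_pos (binEntropy_pos hp0 hp1) (log_pos one_lt_two)
  have hHp : binEnt p * log 2 ≤ p * (1 - log p) := by
    rw [binEnt_eq_binEntropy_div_log_two, div_mul_cancel₀ _ (log_pos one_lt_two).ne']
    exact binEntropy_le_mul_one_sub_log hp1.le
  have hmain := le_two_mul_logb_six_div hp0 (by linarith [log_neg hp0 hp1]) hH hHp
  have hL : 0 < logb 2 (6 / binEnt p) := pos_of_mul_pos_right (hH.trans_le hmain) (by positivity)
  rw [ge_iff_le, div_le_iff₀ (by positivity)]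
  linarith
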